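/- Let A be a maximal closed subalgebra of C(X) (X compact Hausdorff), and assume A is essential: every continuous function vanishing on a closed set E with the property that all functions vanishing on E lie in A forces E = X. Then A is pervasive: for every closed F with ∅ ≠ F ⊊ X, the restriction A|F is dense in C(F). -/

import Mathlib

/-!
Let `B` be the algebra of functions whose restriction to `F` lies in the closure of `A|F`.
It is closed and contains `A`, so by maximality `B = A` or `B = C(X)`. If `B = A`, then `A`
contains every function vanishing on `F`, so essentiality forces `F = X`. If `B = C(X)`, then
by Tietze every continuous function on `F` is a restriction, hence lies in the closure of `A|F`.
-/

variable {X : Type} [TopologicalSpace X] [CompactSpace X] [T2Space X]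

/-- A uniform algebra `A` on `X` is pervasive if for every nonempty proper closed subset
`F` of `X`, the restrictions of elements of `A` to `F` are dense in `C(F, ℂ)`. -/
def Pervasive (A : Subalgebra ℂ C(X, ℂ)) : Prop :=
  ∀ F : Set X, IsClosed F → F.Nonempty → F ≠ Set.univ →
    Dense ((fun f : C(X, ℂ) => f.restrict F) '' (A : Set C(X, ℂ)))

namespace Subalgebra

section ComapClosureMap

variable {R S T : Type*} [CommSemiring R] [Semiring S] [Algebra R S] [Semiring T] [Algebra R T]
  [TopologicalSpace T] [IsSemitopologicalSemiring T]

def comapClosureMap (φ : S →ₐ[R] T) (A : Subalgebra R S) : Subalgebra R S :=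
  (A.map φ).topologicalClosure.comap φ

variable {φ : S →ₐ[R] T} (A : Subalgebra R S)

theorem isClosed_comapClosureMap [TopologicalSpace S] (hφ : Continuous φ) :
    IsClosed (A.comapClosureMap φ : Set S) :=
  (isClosed_topologicalClosure _).preimage hφ

theorem le_comapClosureMap : A ≤ A.comapClosureMap φ :=
  fun f hf => le_topologicalClosure _ ⟨f, hf, rfl⟩

theorem mem_comapClosureMap_of_map_eq_zero {s : S} (hs : φ s = 0) : s ∈ A.comapClosureMap φ := by
  change φ s ∈ (A.map φ).topologicalClosure
  rw [hs]
  exact zero_mem _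

end ComapClosureMap

end Subalgebra

universe u v

variable {Y : Type u} {𝕜 : Type v} [TopologicalSpace Y] [NormedField 𝕜]

abbrev ContinuousMap.restrictₐ (F : Set Y) : C(Y, 𝕜) →ₐ[𝕜] C(F, 𝕜) :=
  ContinuousMap.compRightAlgHom 𝕜 𝕜 ((ContinuousMap.id Y).restrict F)

namespace Subalgebra

theorem dense_restrict_image_of_comapClosureMap_eq_top [NormalSpace Y] [TietzeExtension.{u, v} 𝕜]
    {F : Set Y} [CompactSpace F] (hF : IsClosed F) {A : Subalgebra 𝕜 C(Y, 𝕜)}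
    (htop : A.comapClosureMap (ContinuousMap.restrictₐ F) = ⊤) :
    Dense ((fun f : C(Y, 𝕜) => f.restrict F) '' (A : Set C(Y, 𝕜))) := by
  refine dense_iff_closure_eq.mpr (Set.eq_univ_of_forall fun g => ?_)
  obtain ⟨f, rfl⟩ := g.exists_restrict_eq hF
  have hf : f ∈ A.comapClosureMap (ContinuousMap.restrictₐ F) := htop ▸ Algebra.mem_top
  exact hf

end Subalgebra

theorem stmt_19 (A : Subalgebra ℂ C(X, ℂ))
    (hmax : ∀ B : Subalgebra ℂ C(X, ℂ), IsClosed (B : Set C(X, ℂ)) → A ≤ B →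
      B = A ∨ B = ⊤)
    (hess : ∀ E : Set X, IsClosed E → (∀ h : C(X, ℂ), (∀ x ∈ E, h x = 0) → h ∈ A) →
      E = Set.univ) :
    Pervasive A := by
  intro F hF _ hFne
  have : CompactSpace F := isCompact_iff_compactSpace.mp hF.isCompact
  set B := A.comapClosureMap (ContinuousMap.restrictₐ F)
  have hB : IsClosed (B : Set C(X, ℂ)) :=
    A.isClosed_comapClosureMap (ContinuousMap.continuous_precomp _)
  rcases hmax B hB A.le_comapClosureMap with hA | htop
  · refine absurd (hess F hF fun h hh => hA ▸ A.mem_comapClosureMap_of_map_eq_zero ?_) hFne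
    exact ContinuousMap.ext fun x => hh x x.2
  · exact Subalgebra.dense_restrict_image_of_comapClosureMap_eq_top hF htop
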